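/- Let A ∈ K^{6×3}, let (h_1,…,h_6) ∈ ℝ^6, and set D = Σ_{i=1}^3 min_{j=1}^6 (deg a_{ji} + h_j); assume D < ∞. Let u, v, y, z ∈ {1,…,6} be pairwise distinct, and suppose that for every three pairwise distinct indices p, q, r ∈ {u,v,y,z} the 3×3 submatrix A[p,q,r] of A formed by rows p, q, r satisfies deg det A[p,q,r] = D − (h_p + h_q + h_r). Then there exist x_1,…,x_6 ∈ K such that deg x_j = h_j for every j ∈ {1,…,6} and Σ_{j=1}^6 a_{ji} x_j = 0 for every i ∈ {1,2,3}. -/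

import Mathlib

noncomputable section

/-- The field of generalized power series over ℝ with complex coefficients. -/
abbrev K : Type := HahnSeries ℝ ℂ

open Classical in
/-- The degree of an element of `K`: the least exponent of its support, `⊤` for `0`. -/
noncomputable def Kdeg (a : K) : WithTop ℝ :=
  if a = 0 then ⊤ else ((HahnSeries.order a : ℝ) : WithTop ℝ)

/-- A square real matrix is tropically non-singular if the minimum in the tropical
permanent is attained by exactly one permutation. -/
def TropNonsing {k : ℕ} (S : Matrix (Fin k) (Fin k) ℝ) : Prop :=
  ∃! σ : Equiv.Perm (Fin k), ∀ τ : Equiv.Perm (Fin k),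
    (∑ i, S i (σ i)) ≤ ∑ i, S i (τ i)

/-- The tropical rank: the largest size of a tropically non-singular square submatrix. -/
noncomputable def tropRank {m n : ℕ} (A : Matrix (Fin m) (Fin n) ℝ) : ℕ :=
  sSup {r : ℕ | ∃ (ρ : Fin r → Fin m) (c : Fin r → Fin n),
    Function.Injective ρ ∧ Function.Injective c ∧ TropNonsing (A.submatrix ρ c)}

/-- A matrix over `K` is a lift of a real matrix if degrees of entries match. -/
def IsLift {m n : ℕ} (F : Matrix (Fin m) (Fin n) K) (B : Matrix (Fin m) (Fin n) ℝ) : Prop :=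
  ∀ i j, Kdeg (F i j) = (B i j : WithTop ℝ)

/-- The Kapranov rank: the smallest rank over `K` of a lift. -/
noncomputable def kapRank {m n : ℕ} (B : Matrix (Fin m) (Fin n) ℝ) : ℕ :=
  sInf {r : ℕ | ∃ F : Matrix (Fin m) (Fin n) K, IsLift F B ∧ F.rank = r}

/-- The tuple `lam` realizes the tropical dependence of the rows of `A`. -/
def Realizes {m n : ℕ} (lam : Fin m → WithTop ℝ) (A : Matrix (Fin m) (Fin n) ℝ) : Prop :=
  (∃ τ, lam τ ≠ ⊤) ∧
  ∀ k : Fin n, ∃ τ₁ τ₂ : Fin m, τ₁ ≠ τ₂ ∧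
    (∀ τ, lam τ₁ + (A τ₁ k : WithTop ℝ) ≤ lam τ + (A τ k : WithTop ℝ)) ∧
    (∀ τ, lam τ₂ + (A τ₂ k : WithTop ℝ) ≤ lam τ + (A τ k : WithTop ℝ))

open Classical in
/-- The pattern of a real matrix, with entries in `{0, ∞} ⊆ ℝ ∪ {∞}`. -/
noncomputable def pat {m n : ℕ} (A : Matrix (Fin m) (Fin n) ℝ) (u : Fin m) (v : Fin n) :
    WithTop ℝ :=
  if ∀ i, A u v ≤ A i v then 0 else ⊤

/-- The support of the `j`-th column of the pattern of `A`. -/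
def colSupp {m n : ℕ} (A : Matrix (Fin m) (Fin n) ℝ) (j : Fin n) : Set (Fin m) :=
  {u | ∀ i, A u j ≤ A i j}

/-!
Rescaling row `j` by `t ^ h j` and column `i` by `t ^ (-μ i)`, where `μ i` is the minimum in
column `i`, makes every entry integral (`0 ≤ orderTop`) and the four minors on rows
`u, v, y, z` units (`orderTop = 0`). Put `x z = 1` and `x j = ε` on the remaining rows outside
`{u, v, y}`, and solve for `x u, x v, x y` by Cramer's rule. Each Cramer numerator is a unit minor
through `z` plus `ε` times an integral element, so for all but finitely many `ε ∈ ℂ` it is a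
unit, and then so is the solved coordinate.
-/

open Function Finset Matrix

namespace Matrix

variable {m n S : Type*} [Fintype n] [CommRing S]

theorem cramer_submatrix_transpose_sum_mul [DecidableEq n] (A : Matrix m n S) (ρ : n → m)
    (s : Finset m) (x : m → S) (p : n) :
    cramer (A.submatrix ρ id)ᵀ (fun i => ∑ j ∈ s, A j i * x j) p =
      ∑ j ∈ s, x j * (A.submatrix (update ρ p j) id).det := by
  have hw : (fun i => ∑ j ∈ s, A j i * x j) = ∑ j ∈ s, x j • A j := by
    ext i; simp [mul_comm]
  rw [hw, map_sum, Finset.sum_apply]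
  refine Finset.sum_congr rfl fun j _ => ?_
  rw [map_smul, Pi.smul_apply, smul_eq_mul, cramer_transpose_apply]
  congr 2
  ext k i
  by_cases hk : k = p <;> simp [updateRow_apply, hk]

theorem sum_mul_extend [Fintype m] [DecidableEq m] (A : Matrix m n S) {ρ : n → m}
    (hρ : Injective ρ) (X : n → S) (x₀ : m → S) (i : n) :
    ∑ j, A j i * extend ρ X x₀ j =
      ((A.submatrix ρ id)ᵀ *ᵥ X) i + ∑ j ∈ (univ.image ρ)ᶜ, A j i * x₀ j := by
  rw [← Finset.sum_add_sum_compl (univ.image ρ), Finset.sum_image hρ.injOn]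
  congr 1
  · simp [mulVec, dotProduct, hρ.extend_apply]
  · refine Finset.sum_congr rfl fun j hj => ?_
    rw [extend_apply']
    simpa using hj

theorem det_submatrix_scale_rows_cols [DecidableEq n] (A : Matrix m n S) (a : m → S) (b : n → S)
    (r : n → m) :
    ((of fun j i => a j * A j i * b i).submatrix r id).det =
      (∏ k, a (r k)) * (A.submatrix r id).det * ∏ i, b i := by
  rw [← det_mul_column (fun k => a (r k)), mul_comm, ← det_mul_row b]
  congr 1
  ext k i
  simp only [submatrix_apply, of_apply, id]
  ring

end Matrix

namespace HahnSeries

theorem le_orderTop_sum {Γ R ι : Type*} [LinearOrder Γ] [AddCommMonoid R] {a : WithTop Γ}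
    (s : Finset ι) (f : ι → HahnSeries Γ R) (hf : ∀ i ∈ s, a ≤ (f i).orderTop) :
    a ≤ (∑ i ∈ s, f i).orderTop :=
  Finset.sum_induction _ (fun x : HahnSeries Γ R => a ≤ x.orderTop)
    (fun _ _ hx hy => (le_min hx hy).trans min_orderTop_le_orderTop_add) (by simp) hf

section OrderedMonoid

variable {Γ R : Type*} [AddCommMonoid Γ] [LinearOrder Γ] [IsOrderedCancelAddMonoid Γ]

theorem orderTop_prod [CommSemiring R] [NoZeroDivisors R] [Nontrivial R] {ι : Type*}
    (s : Finset ι) (f : ι → HahnSeries Γ R) :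
    (∏ i ∈ s, f i).orderTop = ∑ i ∈ s, (f i).orderTop := by
  classical
  induction s using Finset.induction_on with
  | empty => simp
  | insert i s hi ih => rw [prod_insert hi, sum_insert hi, orderTop_mul, ih]

theorem orderTop_det_nonneg [CommRing R] {n : Type*} [Fintype n] [DecidableEq n]
    (M : Matrix n n (HahnSeries Γ R)) (hM : ∀ i j, 0 ≤ (M i j).orderTop) :
    0 ≤ M.det.orderTop := by
  refine det_apply M ▸ le_orderTop_sum _ _ fun σ _ => ?_
  have hprod : 0 ≤ (∏ i, M (σ i) i).orderTop :=
    Finset.prod_induction _ (fun x : HahnSeries Γ R => 0 ≤ x.orderTop)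
      (fun _ _ hx hy => (add_nonneg hx hy).trans orderTop_add_le_mul)
      (single_zero_one (Γ := Γ) (R := R) ▸ orderTop_single_le) fun i _ => hM _ _
  rcases Int.units_eq_one_or (Equiv.Perm.sign σ) with h | h <;> simp [h, hprod]

end OrderedMonoid

theorem exists_ne_zero_orderTop_add_smul_eq {Γ R ι : Type*} [LinearOrder Γ] [Zero Γ] [Field R]
    [Infinite R] [Fintype ι] (f g : ι → HahnSeries Γ R)
    (hfg : ∀ i, (f i).orderTop ≤ (g i).orderTop) :
    ∃ ε : R, ε ≠ 0 ∧ ∀ i, (f i + ε • g i).orderTop = (f i).orderTop := by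
  classical
  obtain ⟨ε, hε⟩ := Infinite.exists_notMem_finset
    (insert 0 (univ.image fun i => -(f i).leadingCoeff / (g i).coeff (f i).order))
  refine ⟨ε, fun h => hε (by simp [h]), fun i => ?_⟩
  rcases eq_or_ne (f i) 0 with hf | hf
  · have hg : g i = 0 := by simpa [hf] using hfg i
    simp [hf, hg]
  have hcoeff : (f i + ε • g i).coeff (f i).order ≠ 0 := by
    rw [coeff_add, coeff_smul, smul_eq_mul, ← leadingCoeff_eq]
    intro h0
    have hg : (g i).coeff (f i).order ≠ 0 := by
      rintro hg; rw [hg, mul_zero, add_zero, leadingCoeff_eq_zero] at h0; exact hf h0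
    refine hε (mem_insert_of_mem (mem_image.2 ⟨i, mem_univ _, ?_⟩))
    rw [div_eq_iff hg]
    linear_combination -h0
  refine le_antisymm ?_ ?_
  · rw [← order_eq_orderTop_of_ne_zero hf]; exact orderTop_le_of_coeff_ne_zero hcoeff
  · exact (le_min le_rfl ((hfg i).trans (orderTop_le_orderTop_smul ε _))).trans
      min_orderTop_le_orderTop_add

section Field

variable {Γ R m n : Type*} [AddCommGroup Γ] [LinearOrder Γ] [IsOrderedAddMonoid Γ]
  [Field R] [Infinite R] [Fintype m] [DecidableEq m] [Fintype n] [DecidableEq n]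

theorem exists_sum_mul_eq_zero_orderTop_eq_zero (A : Matrix m n (HahnSeries Γ R))
    (hA : ∀ j i, 0 ≤ (A j i).orderTop) {ρ : n → m} (hρ : Injective ρ) {z : m}
    (hz : z ∉ Set.range ρ) (hdet : (A.submatrix ρ id).det.orderTop = 0)
    (hdet_update : ∀ p, (A.submatrix (update ρ p z) id).det.orderTop = 0) :
    ∃ x : m → HahnSeries Γ R, (∀ j, (x j).orderTop = 0) ∧
      ∀ i, ∑ j, A j i * x j = 0 := by
  set s := (univ.image ρ)ᶜ
  have hzs : z ∈ s := by simpa [s] using hz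
  set N : n → m → HahnSeries Γ R := fun p j => (A.submatrix (update ρ p j) id).det
  have hN : ∀ p j, 0 ≤ (N p j).orderTop := fun p j =>
    orderTop_det_nonneg _ fun k i => hA _ _
  obtain ⟨ε, hε, hεgen⟩ := exists_ne_zero_orderTop_add_smul_eq (fun p => N p z)
    (fun p => ∑ j ∈ s.erase z, N p j) fun p =>
      (hdet_update p).trans_le <| le_orderTop_sum _ _ fun j _ => hN p j
  set x₀ : m → HahnSeries Γ R := fun j => if j = z then 1 else C ε
  have hx₀ : ∀ j, (x₀ j).orderTop = 0 := fun j => by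
    by_cases hj : j = z <;> simp [x₀, hj, hε]
  set M := (A.submatrix ρ id)ᵀ
  set w : n → HahnSeries Γ R := fun i => ∑ j ∈ s, A j i * x₀ j
  have hcramer : ∀ p, cramer M w p = N p z + ε • ∑ j ∈ s.erase z, N p j := fun p => by
    rw [cramer_submatrix_transpose_sum_mul, ← add_sum_erase s _ hzs, smul_sum]
    congr 1
    · simp [x₀, N]
    · refine sum_congr rfl fun j hj => ?_
      simp only [x₀, if_neg (ne_of_mem_erase hj), C_mul_eq_smul, N]
  have hM : M.det ≠ 0 := by
    rw [det_transpose, ← orderTop_ne_top, hdet]; exact WithTop.zero_ne_top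
  set X := -M.det⁻¹ • cramer M w
  have hX : ∀ p, (X p).orderTop = 0 := fun p => by
    have hinv : (M.det⁻¹).orderTop = 0 := by
      rw [← addVal_apply, AddValuation.map_inv, addVal_apply, det_transpose, hdet, neg_zero]
    simpa [X, hcramer, hεgen, hinv] using hdet_update p
  have hMX : M *ᵥ X = -w := by
    rw [mulVec_smul, mulVec_cramer, smul_smul, neg_mul, inv_mul_cancel₀ hM, neg_smul, one_smul]
  refine ⟨extend ρ X x₀, fun j => ?_, fun i => ?_⟩
  · by_cases hj : ∃ p, ρ p = j
    · obtain ⟨p, rfl⟩ := hj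
      rw [hρ.extend_apply, hX]
    · rw [extend_apply' _ _ _ hj, hx₀]
  · rw [sum_mul_extend A hρ, hMX]
    simp [w, s]

theorem exists_sum_mul_eq_zero_orderTop_eq (A : Matrix m n (HahnSeries Γ R)) (h : m → Γ)
    (μ : n → Γ) (hA : ∀ j i, (μ i : WithTop Γ) ≤ (A j i).orderTop + h j) {ρ : n → m}
    (hρ : Injective ρ) {z : m} (hz : z ∉ Set.range ρ)
    (hdet : (A.submatrix ρ id).det.orderTop = ↑(∑ i, μ i - ∑ k, h (ρ k)))
    (hdet_update : ∀ p, (A.submatrix (update ρ p z) id).det.orderTop =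
      ↑(∑ i, μ i - ∑ k, h (update ρ p z k))) :
    ∃ x : m → HahnSeries Γ R, (∀ j, (x j).orderTop = h j) ∧
      ∀ i, ∑ j, A j i * x j = 0 := by
  set t : Γ → HahnSeries Γ R := fun a => single a 1
  have ht : ∀ a, (t a).orderTop = a := fun a => orderTop_single one_ne_zero
  set B := of fun j i => t (h j) * A j i * t (-μ i)
  have hB : ∀ j i, 0 ≤ (B j i).orderTop := fun j i => calc
    (0 : WithTop Γ) = ↑(μ i) + ↑(-μ i) := by rw [← WithTop.coe_add, add_neg_cancel]; rfl
    _ ≤ (A j i).orderTop + ↑(h j) + ↑(-μ i) := by gcongr; exact hA j i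
    _ = (B j i).orderTop := by simp [B, ht, add_comm]
  have hB_det : ∀ r : n → m,
      (A.submatrix r id).det.orderTop = ↑(∑ i, μ i - ∑ k, h (r k)) →
        (B.submatrix r id).det.orderTop = 0 := fun r hr => by
    rw [det_submatrix_scale_rows_cols, orderTop_mul, orderTop_mul, orderTop_prod, orderTop_prod,
      hr]
    simp only [ht, ← WithTop.coe_sum, ← WithTop.coe_add]
    rw [WithTop.coe_eq_zero, sum_neg_distrib]
    abel
  obtain ⟨x, hx, hBx⟩ := exists_sum_mul_eq_zero_orderTop_eq_zero B hB hρ hz (hB_det ρ hdet)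
    fun p => hB_det _ (hdet_update p)
  refine ⟨fun j => t (h j) * x j, fun j => by simp [ht, hx], fun i => ?_⟩
  have hscale : (∑ j, A j i * (t (h j) * x j)) * t (-μ i) = ∑ j, B j i * x j := by
    rw [sum_mul]
    exact sum_congr rfl fun j _ => by simp only [B, of_apply]; ring
  exact (mul_eq_zero.1 (hscale.trans (hBx i))).resolve_right (single_ne_zero one_ne_zero)

end Field

end HahnSeries

theorem Kdeg_eq_orderTop (a : K) : Kdeg a = a.orderTop := by
  unfold Kdeg
  split_ifs with ha
  · simp [ha]
  · exact HahnSeries.order_eq_orderTop_of_ne_zero ha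

theorem three_equation_system (A : Matrix (Fin 6) (Fin 3) K) (h : Fin 6 → ℝ) (D : ℝ)
    (hD : (D : WithTop ℝ) =
      ∑ i : Fin 3, Finset.univ.inf (fun j : Fin 6 => Kdeg (A j i) + (h j : WithTop ℝ)))
    (u v y z : Fin 6)
    (huv : u ≠ v) (huy : u ≠ y) (huz : u ≠ z) (hvy : v ≠ y) (hvz : v ≠ z) (hyz : y ≠ z)
    (hdet : ∀ p q r : Fin 6, p ∈ ({u, v, y, z} : Set (Fin 6)) →
      q ∈ ({u, v, y, z} : Set (Fin 6)) → r ∈ ({u, v, y, z} : Set (Fin 6)) →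
      p ≠ q → p ≠ r → q ≠ r →
      Kdeg ((A.submatrix ![p, q, r] id).det) = ((D - (h p + h q + h r) : ℝ) : WithTop ℝ)) :
    ∃ x : Fin 6 → K, (∀ j, Kdeg (x j) = (h j : WithTop ℝ)) ∧
      ∀ i : Fin 3, ∑ j, A j i * x j = 0 := by
  simp only [Kdeg_eq_orderTop] at hD hdet ⊢
  have hfin : ∀ i, univ.inf (fun j => (A j i).orderTop + h j) ≠ ⊤ := fun i hi =>
    WithTop.coe_ne_top (hD.trans (WithTop.sum_eq_top.2 ⟨i, mem_univ i, hi⟩))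
  choose μ hμ using fun i => WithTop.ne_top_iff_exists.1 (hfin i)
  have hDμ : D = ∑ i, μ i := by
    rw [← WithTop.coe_eq_coe, hD, WithTop.coe_sum]; simp only [hμ]
  have hρ : Injective ![u, v, y] := by
    intro a b hab; fin_cases a <;> fin_cases b <;> simp_all
  have hz : z ∉ Set.range ![u, v, y] := by
    rintro ⟨p, hp⟩; fin_cases p <;> simp_all
  have hdet' : ∀ p q r : Fin 6, p ∈ ({u, v, y, z} : Set (Fin 6)) →
      q ∈ ({u, v, y, z} : Set (Fin 6)) → r ∈ ({u, v, y, z} : Set (Fin 6)) →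
      p ≠ q → p ≠ r → q ≠ r → (A.submatrix ![p, q, r] id).det.orderTop =
        ↑(∑ i, μ i - ∑ k, h (![p, q, r] k)) := fun p q r hp hq hr hpq hpr hqr => by
    rw [hdet p q r hp hq hr hpq hpr hqr, ← hDμ, Fin.sum_univ_three (fun k => h _)]
    rfl
  refine HahnSeries.exists_sum_mul_eq_zero_orderTop_eq A h μ
    (fun j i => hμ i ▸ Finset.inf_le (mem_univ j)) hρ hz
    (hdet' u v y (by simp) (by simp) (by simp) huv huy hvy) fun p => ?_
  fin_cases p
  · exact (show ![z, v, y] = update ![u, v, y] 0 z by funext k; fin_cases k <;> rfl) ▸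
      hdet' z v y (by simp) (by simp) (by simp) hvz.symm hyz.symm hvy
  · exact (show ![u, z, y] = update ![u, v, y] 1 z by funext k; fin_cases k <;> rfl) ▸
      hdet' u z y (by simp) (by simp) (by simp) huz huy hyz.symm
  · exact (show ![u, v, z] = update ![u, v, y] 2 z by funext k; fin_cases k <;> rfl) ▸
      hdet' u v z (by simp) (by simp) (by simp) huv huz hvz

end
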